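/- Let E be a W*-correspondence over M, σ a normal representation of M on H, and T̃: E ⊗_σ H → H a contraction satisfying T̃(φ(a) ⊗ I_H) = σ(a)T̃ for all a ∈ M. Then T defined by T(ξ)h := T̃(ξ ⊗ h) together with σ is a completely contractive covariant representation of E on H; moreover (T,σ) is isometric (i.e., T(ξ)*T(η) = σ(⟨ξ,η⟩) for all ξ,η ∈ E) if and only if T̃ is an isometry. -/

import Mathlib

noncomputable section

/-- A (right) Hilbert C*-module structure on `E` over `B`. -/
structure CStarModuleStr (B : Type*) (E : Type*)
    [NonUnitalNormedRing B] [StarRing B] [PartialOrder B] [Module ℂ B]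
    [NormedAddCommGroup E] [NormedSpace ℂ E] where
  smulR : E → B → E
  ip : E → E → B
  smulR_add : ∀ x y b, smulR (x + y) b = smulR x b + smulR y b
  smulR_add' : ∀ x b c, smulR x (b + c) = smulR x b + smulR x c
  smulR_mul : ∀ x b c, smulR x (b * c) = smulR (smulR x b) c
  ip_add_right : ∀ x y z, ip x (y + z) = ip x y + ip x z
  ip_smul_right : ∀ (c : ℂ) x y, ip x (c • y) = c • ip x y
  ip_smulR_right : ∀ x y b, ip x (smulR y b) = ip x y * b
  ip_star : ∀ x y, star (ip x y) = ip y x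
  ip_nonneg : ∀ x, 0 ≤ ip x x
  ip_definite : ∀ x, ip x x = 0 → x = 0
  norm_eq : ∀ x : E, ‖x‖ = Real.sqrt ‖ip x x‖

/-- A C*-correspondence structure from `A` to `B` on the bimodule `E`. -/
structure CorrStr (A B E : Type*)
    [NonUnitalNormedRing A] [StarRing A]
    [NonUnitalNormedRing B] [StarRing B] [PartialOrder B] [Module ℂ B]
    [NormedAddCommGroup E] [NormedSpace ℂ E] extends CStarModuleStr B E where
  lS : A → E →ₗ[ℂ] E
  lS_add : ∀ a a', lS (a + a') = lS a + lS a'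
  lS_mul : ∀ a a' x, lS (a * a') x = lS a (lS a' x)
  lS_adj : ∀ a x y, ip (lS a x) y = ip x (lS (star a) y)
  lS_smulR : ∀ a x b, lS a (smulR x b) = smulR (lS a x) b

/-- Data witnessing that the Hilbert space `EK` is the interior tensor product
`E ⊗_τ K` of the correspondence `E` with the representation `τ` of `B` on `K`. -/
structure TensorData {A B E : Type*}
    [NonUnitalNormedRing A] [StarRing A]
    [NonUnitalNormedRing B] [StarRing B] [PartialOrder B] [Module ℂ B]
    [NormedAddCommGroup E] [NormedSpace ℂ E] (C : CorrStr A B E)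
    {K : Type*} [NormedAddCommGroup K] [InnerProductSpace ℂ K] [CompleteSpace K]
    (τ : B → K →L[ℂ] K)
    (EK : Type*) [NormedAddCommGroup EK] [InnerProductSpace ℂ EK] [CompleteSpace EK] where
  tp : E →ₗ[ℂ] K →ₗ[ℂ] EK
  inner_tp : ∀ ξ₁ h₁ ξ₂ h₂,
    (inner ℂ (tp ξ₁ h₁) (tp ξ₂ h₂) : ℂ) = inner ℂ h₁ (τ (C.ip ξ₁ ξ₂) h₂)
  balance : ∀ ξ b h, tp (C.smulR ξ b) h = tp ξ (τ b h)
  total : Dense (Submodule.span ℂ {v : EK | ∃ ξ h, v = tp ξ h} : Set EK)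
  ampL : A → EK →L[ℂ] EK
  ampL_tp : ∀ a ξ h, ampL a (tp ξ h) = tp (C.lS a ξ) h


variable {M : Type*}
    [NormedRing M] [StarRing M] [CStarRing M] [NormedAlgebra ℂ M]
      [StarModule ℂ M] [PartialOrder M] [StarOrderedRing M] [CompleteSpace M]
    {E : Type*} [NormedAddCommGroup E] [NormedSpace ℂ E]
    {H : Type*} [NormedAddCommGroup H] [InnerProductSpace ℂ H] [CompleteSpace H]

/-- `(T, σ)` is a covariant pair for the correspondence `C` over `M`:
`σ` is a *-representation and `T` is a bimodule map. -/
def IsCovariantPair (C : CorrStr M M E) (σ : M →⋆ₐ[ℂ] (H →L[ℂ] H))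
    (T : E →ₗ[ℂ] (H →L[ℂ] H)) : Prop :=
  (∀ a ξ, T (C.lS a ξ) = σ a ∘L T ξ) ∧
  (∀ ξ b, T (C.smulR ξ b) = T ξ ∘L σ b)

/-- Complete contractivity of the covariant pair `(T, σ)`, expressed through the
canonical matricial positivity inequality inherited from the linking algebra. -/
def IsCompletelyContractivePair (C : CorrStr M M E) (σ : M →⋆ₐ[ℂ] (H →L[ℂ] H))
    (T : E →ₗ[ℂ] (H →L[ℂ] H)) : Prop :=
  ∀ (n : ℕ) (ξ : Fin n → E) (h : Fin n → H),
    ‖∑ i, T (ξ i) (h i)‖ ^ 2 ≤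
      (∑ i, ∑ j, (inner ℂ (h i) (σ (C.ip (ξ i) (ξ j)) (h j)) : ℂ)).re

/-- `(T, σ)` is isometric: `T(ξ)* T(η) = σ(⟨ξ, η⟩)`. -/
def IsIsometricPair (C : CorrStr M M E) (σ : M →⋆ₐ[ℂ] (H →L[ℂ] H))
    (T : E →ₗ[ℂ] (H →L[ℂ] H)) : Prop :=
  ∀ ξ η, ContinuousLinearMap.adjoint (T ξ) ∘L T η = σ (C.ip ξ η)

/-- Conversely, a contraction `T̃ : E ⊗_σ H → H` intertwining
`φ(·) ⊗ I` and `σ` gives rise, via `T(ξ)h := T̃(ξ ⊗ h)`, to a completely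
contractive covariant representation `(T, σ)`; and `(T, σ)` is isometric iff
`T̃` is an isometry. -/
theorem stmt3 (C : CorrStr M M E) (σ : M →⋆ₐ[ℂ] (H →L[ℂ] H))
    {EH : Type*} [NormedAddCommGroup EH] [InnerProductSpace ℂ EH]
    [CompleteSpace EH] (td : TensorData C (fun a => σ a) EH)
    (Tt : EH →L[ℂ] H) (hTt : ‖Tt‖ ≤ 1)
    (hint : ∀ a, Tt ∘L td.ampL a = σ a ∘L Tt) :
    ∃ T : E →ₗ[ℂ] (H →L[ℂ] H),
      (∀ ξ h, T ξ h = Tt (td.tp ξ h)) ∧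
      IsCovariantPair C σ T ∧
      IsCompletelyContractivePair C σ T ∧
      (IsIsometricPair C σ T ↔ ∀ x : EH, ‖Tt x‖ = ‖x‖) := by

  classical
  -- boundedness of `h ↦ tp ξ h`
  have bound : ∀ (ξ : E) (h : H), ‖td.tp ξ h‖ ≤ Real.sqrt ‖σ (C.ip ξ ξ)‖ * ‖h‖ := by
    intro ξ h
    have h1 : ‖td.tp ξ h‖ ^ 2 = RCLike.re (inner ℂ (td.tp ξ h) (td.tp ξ h) : ℂ) := by
      rw [inner_self_eq_norm_sq]
    have h3 : ‖td.tp ξ h‖ ^ 2 ≤ ‖σ (C.ip ξ ξ)‖ * ‖h‖ ^ 2 := by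
      rw [h1, td.inner_tp]
      calc RCLike.re (inner ℂ h ((σ (C.ip ξ ξ)) h) : ℂ)
          ≤ ‖(inner ℂ h ((σ (C.ip ξ ξ)) h) : ℂ)‖ := RCLike.re_le_norm _
        _ ≤ ‖h‖ * ‖(σ (C.ip ξ ξ)) h‖ := norm_inner_le_norm _ _
        _ ≤ ‖h‖ * (‖σ (C.ip ξ ξ)‖ * ‖h‖) := by
            gcongr; exact (σ (C.ip ξ ξ)).le_opNorm h
        _ = ‖σ (C.ip ξ ξ)‖ * ‖h‖ ^ 2 := by ring
    calc ‖td.tp ξ h‖ = Real.sqrt (‖td.tp ξ h‖ ^ 2) :=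
          (Real.sqrt_sq (norm_nonneg _)).symm
      _ ≤ Real.sqrt (‖σ (C.ip ξ ξ)‖ * ‖h‖ ^ 2) := Real.sqrt_le_sqrt h3
      _ = Real.sqrt ‖σ (C.ip ξ ξ)‖ * ‖h‖ := by
          rw [Real.sqrt_mul (norm_nonneg _), Real.sqrt_sq (norm_nonneg _)]
  set T0 : E → (H →L[ℂ] H) := fun ξ =>
    Tt.comp (LinearMap.mkContinuous (td.tp ξ) (Real.sqrt ‖σ (C.ip ξ ξ)‖) (bound ξ))
    with hT0
  have T0_apply : ∀ ξ h, T0 ξ h = Tt (td.tp ξ h) := fun ξ h => rfl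
  set T : E →ₗ[ℂ] (H →L[ℂ] H) :=
    { toFun := T0
      map_add' := fun ξ η => by
        ext h
        simp [T0_apply, map_add, LinearMap.add_apply]
      map_smul' := fun c ξ => by
        ext h
        simp [T0_apply, map_smul, LinearMap.smul_apply] } with hT
  have Tapp : ∀ ξ h, T ξ h = Tt (td.tp ξ h) := fun ξ h => rfl
  refine ⟨T, Tapp, ⟨?_, ?_⟩, ?_, ?_⟩
  · -- left covariance
    intro a ξ
    ext h
    have := ContinuousLinearMap.ext_iff.mp (hint a) (td.tp ξ h)
    simp only [ContinuousLinearMap.comp_apply] at this ⊢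
    rw [Tapp, ← td.ampL_tp, Tapp]
    exact this
  · -- right covariance
    intro ξ b
    ext h
    simp only [ContinuousLinearMap.comp_apply]
    rw [Tapp, Tapp, td.balance]
  · -- complete contractivity
    intro n ξ h
    set x : EH := ∑ i, td.tp (ξ i) (h i) with hx
    have e1 : ∑ i, T (ξ i) (h i) = Tt x := by
      rw [hx, map_sum]
      exact Finset.sum_congr rfl fun i _ => Tapp _ _
    have hx2 : ‖x‖ ^ 2 =
        (∑ i, ∑ j, (inner ℂ (h i) ((σ (C.ip (ξ i) (ξ j))) (h j)) : ℂ)).re := by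
      have hin : (inner ℂ x x : ℂ)
          = ∑ i, ∑ j, (inner ℂ (h i) ((σ (C.ip (ξ i) (ξ j))) (h j)) : ℂ) := by
        rw [hx]
        rw [sum_inner]
        congr 1
        ext i
        rw [inner_sum]
        congr 1
        ext j
        exact td.inner_tp _ _ _ _
      have := inner_self_eq_norm_sq (𝕜 := ℂ) x
      rw [hin] at this
      rw [← this]
      rfl
    have hTx : ‖Tt x‖ ≤ ‖x‖ := by
      calc ‖Tt x‖ ≤ ‖Tt‖ * ‖x‖ := Tt.le_opNorm x
        _ ≤ 1 * ‖x‖ := by gcongr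
        _ = ‖x‖ := one_mul _
    calc ‖∑ i, T (ξ i) (h i)‖ ^ 2 = ‖Tt x‖ ^ 2 := by rw [e1]
      _ ≤ ‖x‖ ^ 2 := by gcongr
      _ = _ := hx2
  · -- isometric iff
    constructor
    · intro hiso
      -- inner products are preserved on elementary tensors
      have elem : ∀ (ζ : E) (g : H) (η : E) (k : H),
          (inner ℂ (Tt (td.tp ζ g)) (Tt (td.tp η k)) : ℂ)
            = inner ℂ (td.tp ζ g) (td.tp η k) := by
        intro ζ g η k
        rw [← Tapp, ← Tapp]
        have h1 : (inner ℂ (T ζ g) (T η k) : ℂ)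
            = inner ℂ g ((ContinuousLinearMap.adjoint (T ζ)) (T η k)) :=
          (ContinuousLinearMap.adjoint_inner_right _ _ _).symm
        have h2 : (ContinuousLinearMap.adjoint (T ζ)) (T η k)
            = (σ (C.ip ζ η)) k := by
          have := ContinuousLinearMap.ext_iff.mp (hiso ζ η) k
          simpa using this
        rw [h1, h2, td.inner_tp]
      set S : Set EH := {v : EH | ∃ ξ h, v = td.tp ξ h} with hS
      have base : ∀ v ∈ Submodule.span ℂ S, ∀ (η : E) (k : H),
          (inner ℂ (Tt (td.tp η k)) (Tt v) : ℂ) = inner ℂ (td.tp η k) v := by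
        intro v hv η k
        induction hv using Submodule.span_induction with
        | mem z hz =>
            obtain ⟨ζ, g, rfl⟩ := hz
            exact elem η k ζ g
        | zero => simp
        | add y z _ _ hy hz => simp [inner_add_right, hy, hz]
        | smul c y _ hy => simp [inner_smul_right, hy]
      have key : ∀ v ∈ Submodule.span ℂ S, ∀ w ∈ Submodule.span ℂ S,
          (inner ℂ (Tt v) (Tt w) : ℂ) = inner ℂ v w := by
        intro v hv w hw
        induction hv using Submodule.span_induction with
        | mem z hz =>
            obtain ⟨ζ, g, rfl⟩ := hz
            exact base w hw ζ g
        | zero => simp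
        | add y z _ _ hy hz => simp [inner_add_left, hy, hz]
        | smul c y _ hy => simp [inner_smul_left, hy]
      have normeq : ∀ v ∈ Submodule.span ℂ S, ‖Tt v‖ = ‖v‖ := by
        intro v hv
        have h1 := key v hv v hv
        have h2 := inner_self_eq_norm_sq (𝕜 := ℂ) (Tt v)
        have h3 := inner_self_eq_norm_sq (𝕜 := ℂ) v
        rw [h1, h3] at h2
        calc ‖Tt v‖ = Real.sqrt (‖Tt v‖ ^ 2) := (Real.sqrt_sq (norm_nonneg _)).symm
          _ = Real.sqrt (‖v‖ ^ 2) := by rw [← h2]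
          _ = ‖v‖ := Real.sqrt_sq (norm_nonneg _)
      intro x
      have hcont : Continuous fun y : EH => ‖Tt y‖ := Tt.continuous.norm
      have := Continuous.ext_on td.total hcont continuous_norm normeq
      exact congrFun this x
    · intro hisom ξ η
      ext k
      apply ext_inner_left ℂ
      intro h
      have h1 : (inner ℂ h ((ContinuousLinearMap.adjoint (T ξ) ∘L T η) k) : ℂ)
          = inner ℂ (T ξ h) (T η k) := by
        rw [ContinuousLinearMap.comp_apply, ContinuousLinearMap.adjoint_inner_right]
      have h2 : (inner ℂ (T ξ h) (T η k) : ℂ) = inner ℂ (td.tp ξ h) (td.tp η k) := by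
        rw [Tapp, Tapp]
        exact LinearIsometry.inner_map_map ⟨(Tt : EH →ₗ[ℂ] H), hisom⟩ _ _
      rw [h1, h2, td.inner_tp]


end
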